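/- arXiv:2605.06755 — 4 statements merged into one kernel-verified Lean document; each statement's English description precedes it below -/
import Mathlib

section
/- Let A be a real d×d matrix, ρ ≥ 1 with ‖A‖ ≤ ρ, and let η ≥ 0, M₃ ≥ 0, G ≥ 0. Suppose (e_n) is a sequence of vectors in ℝ^d with ‖e_n‖ ≤ (M₃/2)·n²·η²·G² for all n ≥ 0, and define ξ₀ = 0 and ξ_{n+1} = A·ξ_n − η·e_n. Then for every K ≥ 1, ‖ξ_K‖ ≤ (K(K−1)(2K−1)/12) · η³ · M₃ · G² · ρ^{K−1}. -/
/-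
Taking norms in the recursion gives ‖ξ_{n+1}‖ ≤ ρ ‖ξ_n‖ + η ‖e_n‖. Unrolling from ξ₀ = 0 and
bounding every power ρ^j with j < K by ρ^{K-1} (as ρ ≥ 1) gives
‖ξ_K‖ ≤ ρ^{K-1} ∑_{n<K} η ‖e_n‖ ≤ ρ^{K-1} (η³ M₃ G² / 2) ∑_{n<K} n²,
and ∑_{n<K} n² = K(K-1)(2K-1)/6.
-/

/-- Operator (spectral) norm of a real matrix, induced by the Euclidean norm. -/
noncomputable def matOpNorm {d : ℕ} (A : Matrix (Fin d) (Fin d) ℝ) : ℝ :=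
  ‖(Matrix.toEuclideanCLM (𝕜 := ℝ) (n := Fin d) A :
      EuclideanSpace ℝ (Fin d) →L[ℝ] EuclideanSpace ℝ (Fin d))‖

/-- A matrix acting on a Euclidean vector by matrix-vector multiplication. -/
noncomputable def mulVecE {d : ℕ} (A : Matrix (Fin d) (Fin d) ℝ)
    (v : EuclideanSpace ℝ (Fin d)) : EuclideanSpace ℝ (Fin d) :=
  Matrix.toEuclideanCLM (𝕜 := ℝ) (n := Fin d) A v

open Finset

lemma norm_mulVecE_le {d : ℕ} {A : Matrix (Fin d) (Fin d) ℝ} {ρ : ℝ}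
    (hA : matOpNorm A ≤ ρ) (v : EuclideanSpace ℝ (Fin d)) :
    ‖mulVecE A v‖ ≤ ρ * ‖v‖ :=
  ((Matrix.toEuclideanCLM (𝕜 := ℝ) (n := Fin d) A).le_opNorm v).trans
    (mul_le_mul_of_nonneg_right hA (norm_nonneg v))

lemma norm_mulVecE_sub_smul_le {d : ℕ} {A : Matrix (Fin d) (Fin d) ℝ} {ρ η : ℝ}
    (hA : matOpNorm A ≤ ρ) (hη : 0 ≤ η) (v w : EuclideanSpace ℝ (Fin d)) :
    ‖mulVecE A v - η • w‖ ≤ ρ * ‖v‖ + η * ‖w‖ :=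
  calc ‖mulVecE A v - η • w‖ ≤ ‖mulVecE A v‖ + ‖η • w‖ := norm_sub_le _ _
    _ ≤ ρ * ‖v‖ + η * ‖w‖ := by
      rw [norm_smul, Real.norm_of_nonneg hη]
      gcongr
      exact norm_mulVecE_le hA v

lemma le_pow_mul_sum_of_le_mul_add {u b : ℕ → ℝ} {ρ : ℝ} (hρ : 1 ≤ ρ) (hb : ∀ n, 0 ≤ b n)
    (h0 : u 0 ≤ 0) (hu : ∀ n, u (n + 1) ≤ ρ * u n + b n) (K : ℕ) :
    u (K + 1) ≤ ρ ^ K * ∑ n ∈ range (K + 1), b n := by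
  have hρ0 : 0 ≤ ρ := zero_le_one.trans hρ
  induction K with
  | zero =>
    simpa using (hu 0).trans (add_le_of_nonpos_left (mul_nonpos_of_nonneg_of_nonpos hρ0 h0))
  | succ K ih =>
    have hpow : 1 ≤ ρ ^ (K + 1) := one_le_pow₀ hρ
    calc u (K + 2) ≤ ρ * u (K + 1) + b (K + 1) := hu (K + 1)
      _ ≤ ρ * (ρ ^ K * ∑ n ∈ range (K + 1), b n) + ρ ^ (K + 1) * b (K + 1) := by
        gcongr
        exact le_mul_of_one_le_left (hb _) hpow
      _ = ρ ^ (K + 1) * ∑ n ∈ range (K + 2), b n := by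
        rw [sum_range_succ _ (K + 1)]
        ring

lemma sum_range_cast_sq (K : ℕ) :
    ∑ n ∈ range K, (n : ℝ) ^ 2 = K * (K - 1) * (2 * K - 1) / 6 := by
  induction K with
  | zero => simp
  | succ K ih =>
    rw [sum_range_succ, ih]
    push_cast
    ring

theorem stmt7_general {d : ℕ} (A : Matrix (Fin d) (Fin d) ℝ) (ρ : ℝ) (hρ : 1 ≤ ρ)
    (hA : matOpNorm A ≤ ρ) (η M₃ G : ℝ) (hη : 0 ≤ η)
    (e : ℕ → EuclideanSpace ℝ (Fin d))
    (he : ∀ n : ℕ, ‖e n‖ ≤ M₃ / 2 * (n : ℝ) ^ 2 * η ^ 2 * G ^ 2)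
    (ξ : ℕ → EuclideanSpace ℝ (Fin d)) (hξ0 : ξ 0 = 0)
    (hξ : ∀ n, ξ (n + 1) = mulVecE A (ξ n) - η • e n) :
    ∀ K : ℕ, 1 ≤ K →
      ‖ξ K‖ ≤ (K : ℝ) * ((K : ℝ) - 1) * (2 * (K : ℝ) - 1) / 12 *
        η ^ 3 * M₃ * G ^ 2 * ρ ^ (K - 1) := by
  intro K hK
  obtain ⟨k, rfl⟩ := Nat.exists_eq_add_of_le' hK
  have hstep (n : ℕ) : ‖ξ (n + 1)‖ ≤ ρ * ‖ξ n‖ + η * ‖e n‖ := by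
    rw [hξ n]
    exact norm_mulVecE_sub_smul_le hA hη _ _
  have hgronwall := le_pow_mul_sum_of_le_mul_add (u := fun n ↦ ‖ξ n‖) hρ
    (fun n ↦ mul_nonneg hη (norm_nonneg (e n))) (by simp [hξ0]) hstep k
  calc ‖ξ (k + 1)‖ ≤ ρ ^ k * ∑ n ∈ range (k + 1), η * ‖e n‖ := hgronwall
    _ ≤ ρ ^ k * ∑ n ∈ range (k + 1), η * (M₃ / 2 * (n : ℝ) ^ 2 * η ^ 2 * G ^ 2) := by
      gcongr with n
      exact he n
    _ = ρ ^ k * (η ^ 3 * M₃ * G ^ 2 / 2 * ∑ n ∈ range (k + 1), (n : ℝ) ^ 2) := by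
      congr 1
      rw [mul_sum]
      exact sum_congr rfl fun n _ ↦ by ring
    _ = _ := by
      rw [sum_range_cast_sq, Nat.add_sub_cancel]
      push_cast
      ring

/-- accumulation bound for the non-quadratic error recursion. -/
theorem stmt7 {d : ℕ} (A : Matrix (Fin d) (Fin d) ℝ) (ρ : ℝ) (hρ : 1 ≤ ρ)
    (hA : matOpNorm A ≤ ρ) (η M₃ G : ℝ) (hη : 0 ≤ η) (hM₃ : 0 ≤ M₃) (hG : 0 ≤ G)
    (e : ℕ → EuclideanSpace ℝ (Fin d))
    (he : ∀ n : ℕ, ‖e n‖ ≤ M₃ / 2 * (n : ℝ) ^ 2 * η ^ 2 * G ^ 2)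
    (ξ : ℕ → EuclideanSpace ℝ (Fin d)) (hξ0 : ξ 0 = 0)
    (hξ : ∀ n, ξ (n + 1) = mulVecE A (ξ n) - η • e n) :
    ∀ K : ℕ, 1 ≤ K →
      ‖ξ K‖ ≤ (K : ℝ) * ((K : ℝ) - 1) * (2 * (K : ℝ) - 1) / 12 *
        η ^ 3 * M₃ * G ^ 2 * ρ ^ (K - 1) :=
  stmt7_general A ρ hρ hA η M₃ G hη e he ξ hξ0 hξ
end

section
/- Let H₀ be a real d×d matrix, g₀ ∈ ℝ^d, η ≥ 0, and K ≥ 2. Set A = I − η·H₀, D = I − η·diag(H₀), and ρ = max(1, ‖A‖). Then ‖η·∑_{n=0}^{K−1} (A^n − D^n)·g₀‖ ≤ (K(K−1)/2) · η² · ‖H₀^off‖ · ‖g₀‖ · ρ^{K−2}, where H₀^off = H₀ − diag(H₀) is the off-diagonal part of H₀. -/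
/-!
Since `A − D = −η · H₀^off`, the claim reduces to a norm bound in an arbitrary normed ring:
`aⁿ⁺¹ − bⁿ⁺¹ = a (aⁿ − bⁿ) + (a − b) bⁿ` gives `‖aⁿ − bⁿ‖ ≤ n ‖a − b‖ ρⁿ⁻¹` whenever
`‖a‖, ‖b‖ ≤ ρ`, and summing over `n < K` (with `ρ ≥ 1`) gives the factor `K(K−1)/2`.
The only matrix-specific input is `‖D‖ ≤ ‖A‖`: `D` is the diagonal part of `A`, and the
spectral norm dominates every entry.
-/

open Finset
open scoped Matrix.Norms.L2Operator

section NormedRing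

variable {R : Type*} [SeminormedRing R]

theorem norm_pow_succ_sub_pow_succ_le {a b : R} {ρ : ℝ} (ha : ‖a‖ ≤ ρ) (hb : ‖b‖ ≤ ρ)
    (n : ℕ) : ‖a ^ (n + 1) - b ^ (n + 1)‖ ≤ (n + 1) * ‖a - b‖ * ρ ^ n := by
  have hρ : 0 ≤ ρ := (norm_nonneg a).trans ha
  induction n with
  | zero => simp
  | succ n ih =>
    have hsplit : a ^ (n + 2) - b ^ (n + 2) = a * (a ^ (n + 1) - b ^ (n + 1)) +
        (a - b) * b ^ (n + 1) := by
      rw [pow_succ' a, pow_succ' b]; noncomm_ring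
    have hbpow : ‖b ^ (n + 1)‖ ≤ ρ ^ (n + 1) :=
      (norm_pow_le' b n.succ_pos).trans (pow_le_pow_left₀ (norm_nonneg b) hb _)
    calc ‖a ^ (n + 2) - b ^ (n + 2)‖
        ≤ ‖a‖ * ‖a ^ (n + 1) - b ^ (n + 1)‖ + ‖a - b‖ * ‖b ^ (n + 1)‖ := by
          rw [hsplit]
          exact (norm_add_le _ _).trans (add_le_add (norm_mul_le _ _) (norm_mul_le _ _))
      _ ≤ ρ * ((n + 1) * ‖a - b‖ * ρ ^ n) + ‖a - b‖ * ρ ^ (n + 1) := by gcongr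
      _ = (↑(n + 1) + 1) * ‖a - b‖ * ρ ^ (n + 1) := by push_cast; ring

theorem norm_pow_sub_pow_le {a b : R} {ρ : ℝ} (ha : ‖a‖ ≤ ρ) (hb : ‖b‖ ≤ ρ) (n : ℕ) :
    ‖a ^ n - b ^ n‖ ≤ n * ‖a - b‖ * ρ ^ (n - 1) := by
  cases n with
  | zero => simp
  | succ n => simpa using norm_pow_succ_sub_pow_succ_le ha hb n

theorem sum_range_natCast_real (K : ℕ) : ∑ n ∈ range K, (n : ℝ) = K * (K - 1) / 2 := by
  induction K with
  | zero => simp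
  | succ K ih => rw [sum_range_succ, ih]; push_cast; ring

theorem norm_sum_range_pow_sub_pow_le {a b : R} {ρ : ℝ} (hρ : 1 ≤ ρ) (ha : ‖a‖ ≤ ρ)
    (hb : ‖b‖ ≤ ρ) (K : ℕ) :
    ‖∑ n ∈ range K, (a ^ n - b ^ n)‖ ≤ K * (K - 1) / 2 * ‖a - b‖ * ρ ^ (K - 2) := by
  have hterm : ∀ n ∈ range K, ‖a ^ n - b ^ n‖ ≤ n * (‖a - b‖ * ρ ^ (K - 2)) := by
    intro n hn
    have hexp : n - 1 ≤ K - 2 := by rw [mem_range] at hn; omega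
    calc ‖a ^ n - b ^ n‖ ≤ n * ‖a - b‖ * ρ ^ (n - 1) := norm_pow_sub_pow_le ha hb n
      _ ≤ n * ‖a - b‖ * ρ ^ (K - 2) := by gcongr
      _ = n * (‖a - b‖ * ρ ^ (K - 2)) := by ring
  calc ‖∑ n ∈ range K, (a ^ n - b ^ n)‖
      ≤ ∑ n ∈ range K, n * (‖a - b‖ * ρ ^ (K - 2)) := norm_sum_le_of_le _ hterm
    _ = K * (K - 1) / 2 * ‖a - b‖ * ρ ^ (K - 2) := by
      rw [← sum_mul, sum_range_natCast_real]; ring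

end NormedRing

namespace Matrix

variable {𝕜 m n : Type*} [RCLike 𝕜] [Fintype m] [Fintype n]

theorem l2_opNorm_entry_le [DecidableEq n] (A : Matrix m n 𝕜) (i : m) (j : n) :
    ‖A i j‖ ≤ ‖A‖ := by
  let x : EuclideanSpace 𝕜 n := EuclideanSpace.single j 1
  have hAx : ((EuclideanSpace.equiv m 𝕜).symm (A *ᵥ x)) i = A i j := by
    simp [x, EuclideanSpace.single, mulVec_single]
  calc ‖A i j‖ ≤ ‖(EuclideanSpace.equiv m 𝕜).symm (A *ᵥ x)‖ :=
        hAx ▸ PiLp.norm_apply_le _ i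
    _ ≤ ‖A‖ * ‖x‖ := l2_opNorm_mulVec A x
    _ = ‖A‖ := by simp [x]

theorem l2_opNorm_diagonal_diag_le [DecidableEq n] (A : Matrix n n 𝕜) :
    ‖diagonal A.diag‖ ≤ ‖A‖ := by
  rw [l2_opNorm_diagonal]
  exact pi_norm_le_iff_of_nonneg (norm_nonneg A) |>.mpr fun i ↦ l2_opNorm_entry_le A i i

end Matrix

theorem stmt8_general {d : ℕ} (H₀ : Matrix (Fin d) (Fin d) ℝ) (g₀ : EuclideanSpace ℝ (Fin d))
    (η : ℝ) (hη : 0 ≤ η) (K : ℕ)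
    (A D : Matrix (Fin d) (Fin d) ℝ)
    (hA : A = 1 - η • H₀)
    (hD : D = 1 - η • Matrix.diagonal (fun i => H₀ i i))
    (ρ : ℝ) (hρ : ρ = max 1 (matOpNorm A)) :
    ‖η • ∑ n ∈ Finset.range K, mulVecE (A ^ n - D ^ n) g₀‖ ≤
      (K : ℝ) * ((K : ℝ) - 1) / 2 * η ^ 2 *
        matOpNorm (H₀ - Matrix.diagonal (fun i => H₀ i i)) * ‖g₀‖ * ρ ^ (K - 2) := by
  change _ ≤ _ * ‖H₀ - Matrix.diagonal H₀.diag‖ * _ * _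
  change ρ = max 1 ‖A‖ at hρ
  have hDA : D = Matrix.diagonal A.diag := by
    subst hA hD; ext i j
    by_cases h : i = j <;> simp [h]
  have hAD : A - D = -(η • (H₀ - Matrix.diagonal H₀.diag)) := by
    rw [hA, hD, smul_sub]; abel
  have hAρ : ‖A‖ ≤ ρ := hρ ▸ le_max_right _ _
  have hDρ : ‖D‖ ≤ ρ := hDA ▸ (A.l2_opNorm_diagonal_diag_le.trans hAρ)
  have hsum := norm_sum_range_pow_sub_pow_le (hρ ▸ le_max_left _ _) hAρ hDρ K
  rw [hAD, norm_neg, norm_smul, Real.norm_of_nonneg hη] at hsum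
  calc ‖η • ∑ n ∈ range K, mulVecE (A ^ n - D ^ n) g₀‖
      = η * ‖Matrix.toEuclideanCLM (𝕜 := ℝ) (∑ n ∈ range K, (A ^ n - D ^ n)) g₀‖ := by
        simp only [mulVecE, map_sum, _root_.sum_apply, norm_smul, Real.norm_of_nonneg hη]
    _ ≤ η * (‖∑ n ∈ range K, (A ^ n - D ^ n)‖ * ‖g₀‖) := by
        gcongr; exact ContinuousLinearMap.le_opNorm _ _
    _ ≤ η * (K * (K - 1) / 2 * (η * ‖H₀ - Matrix.diagonal H₀.diag‖) * ρ ^ (K - 2) * ‖g₀‖) := by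
        gcongr
    _ = _ := by ring

/-- diagonalization error for the accumulated displacement. -/
theorem stmt8 {d : ℕ} (H₀ : Matrix (Fin d) (Fin d) ℝ) (g₀ : EuclideanSpace ℝ (Fin d))
    (η : ℝ) (hη : 0 ≤ η) (K : ℕ) (hK : 2 ≤ K)
    (A D : Matrix (Fin d) (Fin d) ℝ)
    (hA : A = 1 - η • H₀)
    (hD : D = 1 - η • Matrix.diagonal (fun i => H₀ i i))
    (ρ : ℝ) (hρ : ρ = max 1 (matOpNorm A)) :
    ‖η • ∑ n ∈ Finset.range K, mulVecE (A ^ n - D ^ n) g₀‖ ≤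
      (K : ℝ) * ((K : ℝ) - 1) / 2 * η ^ 2 *
        matOpNorm (H₀ - Matrix.diagonal (fun i => H₀ i i)) * ‖g₀‖ * ρ ^ (K - 2) :=
  stmt8_general H₀ g₀ η hη K A D hA hD ρ hρ
end

section
/- Let H₀ be a real d×d matrix, g₀, θ₀ ∈ ℝ^d, η ≥ 0, δ > 0, K ≥ 1, R ≥ 0, and g₁ = g₀ − η·H₀·g₀. Let 𝒜 = {i : |g₀_i| > δ} and 𝒮 its complement; for i ∈ 𝒜 set r_i = g₁_i/g₀_i, and for all i set r̄_i = 1 − η·H₀_{ii}. Assume |r_i| ≤ R for all i ∈ 𝒜 and |r̄_i| ≤ R for all i. Set C_{K,R} = ∑_{n=1}^{K−1} n·R^{n−1} and D_{K,R} = 2 + ∑_{n=0}^{K−1} R^n. Define θ_K^{emp} coordinate-wise by θ_{0,i} − η·g₀_i·S_K(r_i) for i ∈ 𝒜 and θ_{0,i} − η·(g₀_i + g₁_i) for i ∈ 𝒮, and define θ_K^{diag} coordinate-wise by θ_{0,i} − η·g₀_i·S_K(r̄_i) for all i. Then ‖θ_K^{emp} − θ_K^{diag}‖ ≤ η²·C_{K,R}·(‖H₀^off‖_∞/δ)·‖g₀‖_∞·‖g₀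 restricted to 𝒜‖ + η·D_{K,R}·∑_{i ∈ 𝒮} |g₀_i| + η²·∑_{i ∈ 𝒮} |(H₀·g₀)_i|. -/
/-!
On the active set `|g₀ i| > δ` both updates are `θ₀ i - η g₀ i S_K(·)` and differ only through
the ratio, where `r i - r̄ i = -η (∑_{j ≠ i} H₀ i j g₀ j) / g₀ i` is at most
`η ‖H₀^off‖_∞ ‖g₀‖_∞ / δ`; since `|x^n - y^n| ≤ n R^(n-1) |x - y|` on `[-R, R]`, `S_K` is
`C_{K,R}`-Lipschitz there. On the inactive set the coordinates are bounded one by one. The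
active part is then measured in `ℓ²` and the inactive part in `ℓ¹`, which dominates `ℓ²`.
-/

/-- Geometric sum `S_K(x) = ∑_{n=0}^{K-1} x^n`. -/
noncomputable def SK (K : ℕ) (x : ℝ) : ℝ := ∑ n ∈ Finset.range K, x ^ n

/-- Maximum absolute coordinate of a vector (sup norm), for `0 < d`. -/
noncomputable def vecSupNorm {d : ℕ} (hd : 0 < d) (v : Fin d → ℝ) : ℝ :=
  Finset.univ.sup' (Finset.univ_nonempty_iff.mpr ⟨⟨0, hd⟩⟩) fun j => |v j|

/-- Maximum off-diagonal absolute row sum `max_i ∑_{j ≠ i} |A i j|`, for `0 < d`. -/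
noncomputable def offRowSum {d : ℕ} (hd : 0 < d) (A : Matrix (Fin d) (Fin d) ℝ) : ℝ :=
  Finset.univ.sup' (Finset.univ_nonempty_iff.mpr ⟨⟨0, hd⟩⟩) fun i =>
    ∑ j ∈ Finset.univ.erase i, |A i j|

/-- Reinterpret a plain vector as an element of Euclidean space. -/
noncomputable def toE {d : ℕ} (f : Fin d → ℝ) : EuclideanSpace ℝ (Fin d) :=
  (WithLp.equiv 2 (∀ _ : Fin d, ℝ)).symm f

lemma abs_SK_le (K : ℕ) {y R : ℝ} (hy : |y| ≤ R) :
    |SK K y| ≤ ∑ n ∈ Finset.range K, R ^ n :=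
  (Finset.abs_sum_le_sum_abs _ _).trans <| Finset.sum_le_sum fun n _ => by
    rw [abs_pow]
    exact pow_le_pow_left₀ (abs_nonneg _) hy n

lemma abs_SK_sub_SK_le (K : ℕ) {x y R : ℝ} (hx : |x| ≤ R) (hy : |y| ≤ R) :
    |SK K x - SK K y| ≤ (∑ n ∈ Finset.Icc 1 (K - 1), (n : ℝ) * R ^ (n - 1)) * |x - y| := by
  have hrange : ∑ n ∈ Finset.Icc 1 (K - 1), (n : ℝ) * R ^ (n - 1)
      = ∑ n ∈ Finset.range K, (n : ℝ) * R ^ (n - 1) := by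
    refine Finset.sum_subset (fun n hn => ?_) (fun n hn hn' => ?_)
    · simp only [Finset.mem_Icc, Finset.mem_range] at hn ⊢
      omega
    · simp only [Finset.mem_Icc, Finset.mem_range] at hn hn'
      simp [show n = 0 by omega]
  rw [hrange, SK, SK, ← Finset.sum_sub_distrib, Finset.sum_mul]
  refine (Finset.abs_sum_le_sum_abs _ _).trans (Finset.sum_le_sum fun n _ => ?_)
  calc |x ^ n - y ^ n| ≤ |x - y| * n * max |x| |y| ^ (n - 1) := abs_pow_sub_pow_le x y n
    _ ≤ |x - y| * n * R ^ (n - 1) := by gcongr; exact max_le hx hy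
    _ = n * R ^ (n - 1) * |x - y| := by ring

lemma abs_mul_SK_sub_mul_SK_le (K : ℕ) {g x y R η ε : ℝ} (hη : 0 ≤ η)
    (hx : |x| ≤ R) (hy : |y| ≤ R) (hxy : |x - y| ≤ η * ε) :
    |η * g * SK K x - η * g * SK K y|
      ≤ η ^ 2 * (∑ n ∈ Finset.Icc 1 (K - 1), (n : ℝ) * R ^ (n - 1)) * ε * |g| := by
  have hR : 0 ≤ R := (abs_nonneg x).trans hx
  have hC : 0 ≤ ∑ n ∈ Finset.Icc 1 (K - 1), (n : ℝ) * R ^ (n - 1) :=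
    Finset.sum_nonneg fun n _ => by positivity
  rw [← mul_sub, abs_mul, abs_mul, abs_of_nonneg hη]
  calc η * |g| * |SK K x - SK K y|
      ≤ η * |g| * ((∑ n ∈ Finset.Icc 1 (K - 1), (n : ℝ) * R ^ (n - 1)) * (η * ε)) := by
        gcongr
        exact (abs_SK_sub_SK_le K hx hy).trans (by gcongr)
    _ = _ := by ring

lemma abs_mul_SK_sub_two_step_le (K : ℕ) {g h y R η : ℝ} (hη : 0 ≤ η) (hy : |y| ≤ R) :
    |η * g * SK K y - η * (g + (g - η * h))|
      ≤ η * (2 + ∑ n ∈ Finset.range K, R ^ n) * |g| + η ^ 2 * |h| := by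
  have hSK : |SK K y - 2| ≤ 2 + ∑ n ∈ Finset.range K, R ^ n :=
    (abs_sub _ _).trans (by rw [abs_two]; linarith [abs_SK_le K hy])
  calc |η * g * SK K y - η * (g + (g - η * h))| = |η * g * (SK K y - 2) + η ^ 2 * h| := by
        ring_nf
    _ ≤ η * |g| * (2 + ∑ n ∈ Finset.range K, R ^ n) + η ^ 2 * |h| := by
        refine (abs_add_le _ _).trans ?_
        rw [abs_mul, abs_mul, abs_mul, abs_of_nonneg hη, abs_of_nonneg (sq_nonneg η)]
        gcongr
    _ = _ := by ring

lemma Matrix.mulVec_apply_eq_sum_erase_add {ι : Type*} [Fintype ι] [DecidableEq ι]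
    (A : Matrix ι ι ℝ) (v : ι → ℝ) (i : ι) :
    A.mulVec v i = ∑ j ∈ Finset.univ.erase i, A i j * v j + A i i * v i :=
  (Finset.sum_erase_add _ _ (Finset.mem_univ i)).symm

section SupNorms

variable {d : ℕ} (hd : 0 < d)

lemma abs_le_vecSupNorm (v : Fin d → ℝ) (j : Fin d) : |v j| ≤ vecSupNorm hd v :=
  Finset.le_sup' (fun j => |v j|) (Finset.mem_univ j)

lemma vecSupNorm_nonneg (v : Fin d → ℝ) : 0 ≤ vecSupNorm hd v :=
  (abs_nonneg _).trans (abs_le_vecSupNorm hd v ⟨0, hd⟩)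

lemma sum_erase_abs_le_offRowSum (A : Matrix (Fin d) (Fin d) ℝ) (i : Fin d) :
    ∑ j ∈ Finset.univ.erase i, |A i j| ≤ offRowSum hd A :=
  Finset.le_sup' (fun i => ∑ j ∈ Finset.univ.erase i, |A i j|) (Finset.mem_univ i)

lemma offRowSum_nonneg (A : Matrix (Fin d) (Fin d) ℝ) : 0 ≤ offRowSum hd A :=
  (Finset.sum_nonneg fun _ _ => abs_nonneg _).trans (sum_erase_abs_le_offRowSum hd A ⟨0, hd⟩)

lemma abs_sum_erase_mul_le (A : Matrix (Fin d) (Fin d) ℝ) (v : Fin d → ℝ) (i : Fin d) :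
    |∑ j ∈ Finset.univ.erase i, A i j * v j| ≤ offRowSum hd A * vecSupNorm hd v :=
  calc |∑ j ∈ Finset.univ.erase i, A i j * v j|
      ≤ ∑ j ∈ Finset.univ.erase i, |A i j| * vecSupNorm hd v := by
        refine (Finset.abs_sum_le_sum_abs _ _).trans (Finset.sum_le_sum fun j _ => ?_)
        rw [abs_mul]
        gcongr
        exact abs_le_vecSupNorm hd v j
    _ ≤ offRowSum hd A * vecSupNorm hd v := by
        rw [← Finset.sum_mul]
        gcongr
        · exact vecSupNorm_nonneg hd v
        · exact sum_erase_abs_le_offRowSum hd A i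

lemma abs_step_ratio_sub_diag_le (A : Matrix (Fin d) (Fin d) ℝ) (g : Fin d → ℝ)
    {η δ : ℝ} (hη : 0 ≤ η) (hδ : 0 < δ) {i : Fin d} (hi : δ < |g i|) :
    |(g i - η * A.mulVec g i) / g i - (1 - η * A i i)|
      ≤ η * (offRowSum hd A / δ) * vecSupNorm hd g := by
  have hgi : g i ≠ 0 := abs_pos.mp (hδ.trans hi)
  have hratio : (g i - η * A.mulVec g i) / g i - (1 - η * A i i)
      = -(η * ∑ j ∈ Finset.univ.erase i, A i j * g j) / g i := by
    rw [A.mulVec_apply_eq_sum_erase_add]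
    field_simp
    ring
  rw [hratio, abs_div, abs_neg, abs_mul, abs_of_nonneg hη]
  calc η * |∑ j ∈ Finset.univ.erase i, A i j * g j| / |g i|
      ≤ η * (offRowSum hd A * vecSupNorm hd g) / δ := by
        gcongr
        · exact mul_nonneg hη (mul_nonneg (offRowSum_nonneg hd A) (vecSupNorm_nonneg hd g))
        · exact abs_sum_erase_mul_le hd A g i
    _ = η * (offRowSum hd A / δ) * vecSupNorm hd g := by ring

end SupNorms

namespace EuclideanSpace

variable {ι : Type*} [Fintype ι]

lemma norm_le_norm_of_abs_le {x y : EuclideanSpace ℝ ι} (h : ∀ i, |x i| ≤ |y i|) :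
    ‖x‖ ≤ ‖y‖ := by
  rw [EuclideanSpace.norm_eq, EuclideanSpace.norm_eq]
  gcongr with i
  exact h i

lemma norm_le_sum_abs (x : EuclideanSpace ℝ ι) : ‖x‖ ≤ ∑ i, |x i| := by
  rw [EuclideanSpace.norm_eq, Real.sqrt_le_left (Finset.sum_nonneg fun _ _ => abs_nonneg _)]
  simpa using Finset.sum_sq_le_sq_sum_of_nonneg (s := Finset.univ) (fun i _ => abs_nonneg (x i))

lemma norm_le_of_abs_le_on_of_abs_le_off (p : ι → Prop) [DecidablePred p]
    {x : EuclideanSpace ℝ ι} {a b : ι → ℝ} {c : ℝ} (hc : 0 ≤ c)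
    (hp : ∀ i, p i → |x i| ≤ c * |a i|) (hnp : ∀ i, ¬ p i → |x i| ≤ b i) :
    ‖x‖ ≤ c * ‖WithLp.toLp 2 (fun i => if p i then a i else 0)‖
      + ∑ i ∈ Finset.univ.filter (fun i => ¬ p i), b i := by
  set xp : EuclideanSpace ℝ ι := WithLp.toLp 2 fun i => if p i then x i else 0
  set xnp : EuclideanSpace ℝ ι := WithLp.toLp 2 fun i => if p i then 0 else x i
  have hsplit : x = xp + xnp := by
    ext i
    by_cases h : p i <;> simp [xp, xnp, h]
  have hxp : ‖xp‖ ≤ c * ‖WithLp.toLp 2 (fun i => if p i then a i else 0)‖ := by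
    rw [← abs_of_nonneg hc, ← Real.norm_eq_abs, ← norm_smul]
    refine norm_le_norm_of_abs_le fun i => ?_
    by_cases h : p i <;> simp [xp, h, abs_mul, abs_of_nonneg hc, hp i]
  have hxnp : ‖xnp‖ ≤ ∑ i ∈ Finset.univ.filter (fun i => ¬ p i), b i := by
    refine (norm_le_sum_abs xnp).trans ?_
    rw [Finset.sum_filter]
    refine Finset.sum_le_sum fun i _ => ?_
    by_cases h : p i <;> simp [xnp, h, hnp i]
  rw [hsplit]
  exact (norm_add_le _ _).trans (add_le_add hxp hxnp)

end EuclideanSpace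

theorem stmt12_general {d : ℕ} (hd : 0 < d) (H₀ : Matrix (Fin d) (Fin d) ℝ)
    (g₀ θ₀ : EuclideanSpace ℝ (Fin d)) (η δ R : ℝ)
    (hη : 0 ≤ η) (hδ : 0 < δ) (hR : 0 ≤ R) (K : ℕ)
    (g₁ : EuclideanSpace ℝ (Fin d))
    (hg₁ : ∀ i, g₁ i = g₀ i - η * H₀.mulVec (fun j => g₀ j) i)
    (r rbar : Fin d → ℝ)
    (hr : ∀ i, δ < |g₀ i| → r i = g₁ i / g₀ i)
    (hrbar : ∀ i, rbar i = 1 - η * H₀ i i)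
    (hrR : ∀ i, δ < |g₀ i| → |r i| ≤ R)
    (hrbarR : ∀ i, |rbar i| ≤ R)
    (CKR DKR : ℝ)
    (hC : CKR = ∑ n ∈ Finset.Icc 1 (K - 1), (n : ℝ) * R ^ (n - 1))
    (hDk : DKR = 2 + ∑ n ∈ Finset.range K, R ^ n)
    (θemp θdiag : EuclideanSpace ℝ (Fin d))
    (hemp : ∀ i, θemp i =
      if δ < |g₀ i| then θ₀ i - η * g₀ i * SK K (r i)
      else θ₀ i - η * (g₀ i + g₁ i))
    (hdia : ∀ i, θdiag i = θ₀ i - η * g₀ i * SK K (rbar i)) :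
    ‖θemp - θdiag‖ ≤
      η ^ 2 * CKR * (offRowSum hd H₀ / δ) * vecSupNorm hd (fun j => g₀ j) *
          ‖toE (fun i => if δ < |g₀ i| then g₀ i else 0)‖
        + η * DKR * ∑ i ∈ Finset.univ.filter (fun i => ¬ δ < |g₀ i|), |g₀ i|
        + η ^ 2 * ∑ i ∈ Finset.univ.filter (fun i => ¬ δ < |g₀ i|),
            |H₀.mulVec (fun j => g₀ j) i| := by
  have hactive : ∀ i, δ < |g₀ i| → |(θemp - θdiag) i|
      ≤ η ^ 2 * CKR * (offRowSum hd H₀ / δ) * vecSupNorm hd (fun j => g₀ j) * |g₀ i| := by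
    intro i hi
    have hratio := abs_step_ratio_sub_diag_le hd H₀ (fun j => g₀ j) hη hδ hi
    rw [← hg₁, ← hr i hi, ← hrbar, mul_assoc] at hratio
    rw [PiLp.sub_apply, hemp, hdia, if_pos hi, sub_sub_sub_cancel_left, abs_sub_comm, hC]
    exact (abs_mul_SK_sub_mul_SK_le K hη (hrR i hi) (hrbarR i) hratio).trans_eq (by ring)
  have hinactive : ∀ i, ¬ δ < |g₀ i| → |(θemp - θdiag) i|
      ≤ η * DKR * |g₀ i| + η ^ 2 * |H₀.mulVec (fun j => g₀ j) i| := by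
    intro i hi
    rw [PiLp.sub_apply, hemp, hdia, if_neg hi, sub_sub_sub_cancel_left, hg₁, hDk]
    exact abs_mul_SK_sub_two_step_le K hη (hrbarR i)
  have hc : 0 ≤ η ^ 2 * CKR * (offRowSum hd H₀ / δ) * vecSupNorm hd (fun j => g₀ j) := by
    have hoff := offRowSum_nonneg hd H₀
    have hsup := vecSupNorm_nonneg hd (fun j => g₀ j)
    have hC₀ : 0 ≤ CKR := hC ▸ Finset.sum_nonneg fun n _ => by positivity
    positivity
  refine (EuclideanSpace.norm_le_of_abs_le_on_of_abs_le_off _ hc hactive hinactive).trans_eq ?_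
  rw [Finset.sum_add_distrib, ← Finset.mul_sum, ← Finset.mul_sum, add_assoc]
  rfl

/-- additional displacement error from active-set empirical ratios. -/
theorem stmt12 {d : ℕ} (hd : 0 < d) (H₀ : Matrix (Fin d) (Fin d) ℝ)
    (g₀ θ₀ : EuclideanSpace ℝ (Fin d)) (η δ R : ℝ)
    (hη : 0 ≤ η) (hδ : 0 < δ) (hR : 0 ≤ R) (K : ℕ) (hK : 1 ≤ K)
    (g₁ : EuclideanSpace ℝ (Fin d))
    (hg₁ : ∀ i, g₁ i = g₀ i - η * H₀.mulVec (fun j => g₀ j) i)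
    (r rbar : Fin d → ℝ)
    (hr : ∀ i, δ < |g₀ i| → r i = g₁ i / g₀ i)
    (hrbar : ∀ i, rbar i = 1 - η * H₀ i i)
    (hrR : ∀ i, δ < |g₀ i| → |r i| ≤ R)
    (hrbarR : ∀ i, |rbar i| ≤ R)
    (CKR DKR : ℝ)
    (hC : CKR = ∑ n ∈ Finset.Icc 1 (K - 1), (n : ℝ) * R ^ (n - 1))
    (hDk : DKR = 2 + ∑ n ∈ Finset.range K, R ^ n)
    (θemp θdiag : EuclideanSpace ℝ (Fin d))
    (hemp : ∀ i, θemp i =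
      if δ < |g₀ i| then θ₀ i - η * g₀ i * SK K (r i)
      else θ₀ i - η * (g₀ i + g₁ i))
    (hdia : ∀ i, θdiag i = θ₀ i - η * g₀ i * SK K (rbar i)) :
    ‖θemp - θdiag‖ ≤
      η ^ 2 * CKR * (offRowSum hd H₀ / δ) * vecSupNorm hd (fun j => g₀ j) *
          ‖toE (fun i => if δ < |g₀ i| then g₀ i else 0)‖
        + η * DKR * ∑ i ∈ Finset.univ.filter (fun i => ¬ δ < |g₀ i|), |g₀ i|
        + η ^ 2 * ∑ i ∈ Finset.univ.filter (fun i => ¬ δ < |g₀ i|),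
            |H₀.mulVec (fun j => g₀ j) i| :=
  stmt12_general hd H₀ g₀ θ₀ η δ R hη hδ hR K g₁ hg₁ r rbar hr hrbar hrR hrbarR CKR DKR hC hDk θemp
    θdiag hemp hdia
end

section
/- Let h ∈ ℝ^d with h_i > 0 and η > 0 with η·h_i ≤ 1 for all i, let H₀ = diag(h), and let L(θ) = (1/2)·θᵀH₀θ. Define the gradient-descent iterates θ_{n+1}^{GD} = θ_n^{GD} − η·H₀·θ_n^{GD} from θ₀, set r_i = 1 − η·h_i, and let θ₂ = θ₂^{GD} be the second GD iterate. Define the extrapolated point θ_K^{GXPO} coordinate-wise by θ_{0,i} + (θ_{2,i} − θ_{0,i})·S_K(r_i)/S_2(r_i) for K ≥ 1, and the corrected point θ_{new} = θ_K^{GXPO} − η·∇L(θ_K^{GXPO}). Then θ_K^{GXPO} = θ_K^{GD} and θ_{new} = θ_{K+1}^{GD}. -/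
open Finset Matrix

theorem iterate_diagonal_descent_apply {R ι : Type*} [CommRing R] [Fintype ι] [DecidableEq ι]
    (h : ι → R) (η : R) (θ : ℕ → ι → R)
    (hθ : ∀ n, θ (n + 1) = θ n - η • (diagonal h) *ᵥ θ n) (n : ℕ) (i : ι) :
    θ n i = (1 - η * h i) ^ n * θ 0 i := by
  induction n with
  | zero => simp
  | succ n ih =>
    rw [hθ, Pi.sub_apply, Pi.smul_apply, mulVec_diagonal, ih, smul_eq_mul]
    ring

theorem SK_two (x : ℝ) : SK 2 x = 1 + x := by
  simp [SK, sum_range_succ]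

theorem add_sub_mul_SK_div_SK_two (a x : ℝ) (hx : x ≠ -1) (K : ℕ) :
    a + (x ^ 2 * a - a) * (SK K x / SK 2 x) = x ^ K * a := by
  have hS2 : SK 2 x ≠ 0 := by
    rw [SK_two]
    contrapose! hx
    linarith
  have hgeom : SK K x * (x - 1) = x ^ K - 1 := geom_sum_mul x K
  rw [SK_two] at hS2 ⊢
  field_simp
  linear_combination a * (1 + x) * hgeom

theorem stmt14_general {d : ℕ} (h : Fin d → ℝ)
    (η : ℝ) (hηh : ∀ i, η * h i ≤ 1)
    (θ₀ : Fin d → ℝ) (θGD : ℕ → Fin d → ℝ)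
    (hθ0 : θGD 0 = θ₀)
    (hθ : ∀ n, θGD (n + 1) = θGD n - η • (Matrix.diagonal h).mulVec (θGD n))
    (r : Fin d → ℝ) (hrdef : ∀ i, r i = 1 - η * h i)
    (K : ℕ)
    (θK : Fin d → ℝ)
    (hθK : ∀ i, θK i = θ₀ i + (θGD 2 i - θ₀ i) * (SK K (r i) / SK 2 (r i)))
    (θnew : Fin d → ℝ)
    (hθnew : θnew = θK - η • (Matrix.diagonal h).mulVec θK) :
    θK = θGD K ∧ θnew = θGD (K + 1) := by
  have hGD : ∀ n i, θGD n i = r i ^ n * θ₀ i := fun n i => by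
    rw [iterate_diagonal_descent_apply h η θGD hθ, hrdef, hθ0]
  have hr : ∀ i, r i ≠ -1 := fun i => by
    rw [hrdef]
    linarith [hηh i]
  have hK : θK = θGD K := funext fun i => by
    rw [hθK, hGD, hGD, add_sub_mul_SK_div_SK_two _ _ (hr i)]
  exact ⟨hK, by rw [hθnew, hθ, hK]⟩

/-- exactness of GXPO extrapolation on diagonal quadratics.
For the quadratic loss `L θ = (1/2) θᵀ H₀ θ` with `H₀ = diag h`, the gradient is
`∇L θ = H₀.mulVec θ`. -/
theorem stmt14 {d : ℕ} (h : Fin d → ℝ) (hh : ∀ i, 0 < h i)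
    (η : ℝ) (hη : 0 < η) (hηh : ∀ i, η * h i ≤ 1)
    (θ₀ : Fin d → ℝ) (θGD : ℕ → Fin d → ℝ)
    (hθ0 : θGD 0 = θ₀)
    (hθ : ∀ n, θGD (n + 1) = θGD n - η • (Matrix.diagonal h).mulVec (θGD n))
    (r : Fin d → ℝ) (hrdef : ∀ i, r i = 1 - η * h i)
    (K : ℕ) (hK : 1 ≤ K)
    (θK : Fin d → ℝ)
    (hθK : ∀ i, θK i = θ₀ i + (θGD 2 i - θ₀ i) * (SK K (r i) / SK 2 (r i)))
    (θnew : Fin d → ℝ)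
    (hθnew : θnew = θK - η • (Matrix.diagonal h).mulVec θK) :
    θK = θGD K ∧ θnew = θGD (K + 1) :=
  stmt14_general h η hηh θ₀ θGD hθ0 hθ r hrdef K θK hθK θnew hθnew
end
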